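/- Let F be a field of characteristic 0 and C an n×n irreducible generalized Cartan matrix. Suppose D₁·C = B₁ and D₂·C = B₂, where D₁, D₂ ∈ M_n(F) are invertible diagonal matrices and B₁, B₂ ∈ M_n(F) are symmetric. Then there exists λ ∈ F^× such that λ·D₁ = D₂. -/
import Mathlib

lemma diag_ne_zero_of_isUnit {F : Type*} [Field F] {n : ℕ}
    {D : Matrix (Fin n) (Fin n) F} (hD : D.IsDiag) (hu : IsUnit D) (i : Fin n) :
    D i i ≠ 0 := by
  have hdet : IsUnit D.det := (Matrix.isUnit_iff_isUnit_det D).mp hu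
  have h1 : D * D⁻¹ = 1 := Matrix.mul_nonsing_inv D hdet
  have h2 : (D * D⁻¹) i i = 1 := by rw [h1]; simp
  rw [Matrix.mul_apply] at h2
  rw [Finset.sum_eq_single i (fun k _ hk => by rw [hD (Ne.symm hk), zero_mul])
      (fun h => absurd (Finset.mem_univ i) h)] at h2
  exact left_ne_zero_of_mul_eq_one h2

lemma symm_rel {F : Type*} [Field F] {n : ℕ}
    {C : Matrix (Fin n) (Fin n) ℤ} {D : Matrix (Fin n) (Fin n) F}
    (hD : D.IsDiag) (hB : (D * C.map (Int.cast : ℤ → F)).IsSymm) (i j : Fin n) :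
    D j j * (C j i : F) = D i i * (C i j : F) := by
  have h := congrFun (congrFun hB i) j
  rw [Matrix.transpose_apply, Matrix.mul_apply, Matrix.mul_apply] at h
  rw [Finset.sum_eq_single j (fun k _ hk => by rw [hD (Ne.symm hk), zero_mul])
      (fun h => absurd (Finset.mem_univ j) h)] at h
  rw [Finset.sum_eq_single i (fun k _ hk => by rw [hD (Ne.symm hk), zero_mul])
      (fun h => absurd (Finset.mem_univ i) h)] at h
  simpa [Matrix.map_apply] using h

/-- Uniqueness of the symmetrizer of an irreducible generalized Cartan matrix:
if `D₁·C = B₁` and `D₂·C = B₂` with `D₁, D₂` invertible diagonal and `B₁, B₂`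
symmetric, then `D₂ = λ·D₁` for some `λ ∈ F^×`. -/
theorem stmt_13 {F : Type*} [Field F] [CharZero F] {n : ℕ}
    (C : Matrix (Fin n) (Fin n) ℤ)
    (hdiag : ∀ i, C i i = 2)
    (hoff : ∀ i j, i ≠ j → C i j ≤ 0)
    (hzero : ∀ i j, C i j = 0 ↔ C j i = 0)
    (hirr : ∀ s : Set (Fin n), s.Nonempty →
      (∀ i ∈ s, ∀ j ∉ s, C i j = 0) → s = Set.univ)
    (D₁ D₂ : Matrix (Fin n) (Fin n) F)
    (hD₁ : D₁.IsDiag) (hD₂ : D₂.IsDiag)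
    (hu₁ : IsUnit D₁) (hu₂ : IsUnit D₂)
    (hB₁ : (D₁ * C.map (Int.cast : ℤ → F)).IsSymm)
    (hB₂ : (D₂ * C.map (Int.cast : ℤ → F)).IsSymm) :
    ∃ l : F, l ≠ 0 ∧ l • D₁ = D₂ := by
  rcases Nat.eq_zero_or_pos n with hn | hn
  · subst hn
    exact ⟨1, one_ne_zero, Subsingleton.elim _ _⟩
  have hd₁ := diag_ne_zero_of_isUnit hD₁ hu₁
  have hd₂ := diag_ne_zero_of_isUnit hD₂ hu₂
  set i₀ : Fin n := ⟨0, hn⟩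
  set l : F := D₂ i₀ i₀ / D₁ i₀ i₀ with hl
  have hlne : l ≠ 0 := div_ne_zero (hd₂ i₀) (hd₁ i₀)
  set s : Set (Fin n) := {i | D₂ i i = l * D₁ i i} with hs
  have hsn : s.Nonempty := ⟨i₀, by simp [hs, hl, div_mul_cancel₀ _ (hd₁ i₀)]⟩
  have hbdry : ∀ i ∈ s, ∀ j ∉ s, C i j = 0 := by
    intro i hi j hj
    by_contra hC
    have hC' : C j i ≠ 0 := fun h => hC ((hzero j i).mp h)
    have hCF : (C j i : F) ≠ 0 := Int.cast_ne_zero.mpr hC'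
    have h1 := symm_rel hD₁ hB₁ i j
    have h2 := symm_rel hD₂ hB₂ i j
    have hi' : D₂ i i = l * D₁ i i := hi
    have key : D₂ j j * (C j i : F) = (l * D₁ j j) * (C j i : F) := by
      rw [h2, hi', mul_assoc, ← h1]; ring
    exact hj (mul_right_cancel₀ hCF key)
  have huniv := hirr s hsn hbdry
  refine ⟨l, hlne, ?_⟩
  ext i j
  rcases eq_or_ne i j with rfl | hij
  · have hmem : i ∈ s := huniv ▸ Set.mem_univ i
    simpa [Matrix.smul_apply] using hmem.symm
  · simp [Matrix.smul_apply, hD₁ hij, hD₂ hij]
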